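/- There exist δ₀ > 0 and constants 0 < c ≤ C such that: for all x, y with γ₀ - δ₀ < x, y ≤ γ₀ (or γ₀ ≤ x, y < γ₀ + δ₀), one has c·|x-y|·max(|x-γ₀|,|y-γ₀|) ≤ |λ'(x) - λ'(y)| ≤ C·|x-y|·max(|x-γ₀|,|y-γ₀|), where λ(x) = x·√((2+x²)/(1+x²)) and γ₀ = √(1+√7). -/

import Mathlib

noncomputable def lam (x : ℝ) : ℝ := x * Real.sqrt ((2 + x ^ 2) / (1 + x ^ 2))

noncomputable def gamma0 : ℝ := Real.sqrt (1 + Real.sqrt 7)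

/-
`λ' = φ` with `φ x = (x⁴ + 2x² + 2) / ((1 + x²) √((1 + x²)(2 + x²)))`, and since
`x⁴ - 2x² - 6 = (x² - γ₀²)(x² + √7 - 1)` one has `φ' x = g x · (x - γ₀)` with `g` continuous
and `g γ₀ > 0`; so near `γ₀`, `g` is pinched between positive constants. Cauchy's mean value
theorem, comparing `φ` with `(x - γ₀)² / 2`, gives `φ x - φ y = g ξ · ((x - γ₀)² - (y - γ₀)²) / 2`,
and for `x`, `y` on the same side of `γ₀` the last factor has absolute value
`|x - y| (|x - γ₀| + |y - γ₀|)`, which lies between `|x - y| · max` and `2 |x - y| · max`.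
-/

lemma exists_sub_eq_mul_sq_sub_sq_of_hasDerivAt {f g : ℝ → ℝ} {a x y : ℝ}
    (hside : 0 ≤ (x - a) * (y - a))
    (hf : ∀ t ∈ Set.uIcc x y, HasDerivAt f (g t * (t - a)) t) :
    ∃ ξ ∈ Set.uIcc x y, f x - f y = g ξ * ((x - a) ^ 2 - (y - a) ^ 2) / 2 := by
  wlog hxy : x < y generalizing x y
  · rcases (not_lt.mp hxy).eq_or_lt with rfl | hyx
    · exact ⟨y, Set.left_mem_uIcc, by ring⟩
    · rw [Set.uIcc_comm] at hf ⊢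
      obtain ⟨ξ, hξ, h⟩ := this (by rwa [mul_comm]) hf hyx
      exact ⟨ξ, hξ, by linarith⟩
  have hfIcc : ∀ t ∈ Set.Icc x y, HasDerivAt f (g t * (t - a)) t :=
    fun t ht => hf t (Set.Icc_subset_uIcc ht)
  have hQ : ∀ t, HasDerivAt (fun s => (s - a) ^ 2 / 2) (t - a) t := fun t => by
    simpa using (((hasDerivAt_id t).sub_const a).pow 2).div_const 2
  obtain ⟨ξ, hξ, h⟩ := exists_ratio_hasDerivAt_eq_ratio_slope f (fun t => g t * (t - a)) hxy
    (fun t ht => (hfIcc t ht).continuousAt.continuousWithinAt)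
    (fun t ht => hfIcc t (Set.Ioo_subset_Icc_self ht))
    (fun s => (s - a) ^ 2 / 2) (fun t => t - a) (by fun_prop) (fun t _ => hQ t)
  -- `a ∉ (x, y)`, so the comparison function `(t - a)² / 2` has nonzero derivative at `ξ`.
  have hξa : ξ - a ≠ 0 := by
    intro h0
    nlinarith [hξ.1, hξ.2]
  refine ⟨ξ, Set.Icc_subset_uIcc (Set.Ioo_subset_Icc_self hξ), mul_right_cancel₀ hξa ?_⟩
  linear_combination h

lemma abs_sq_sub_sq_eq_of_same_side {a x y : ℝ} (hside : 0 ≤ (x - a) * (y - a)) :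
    |(x - a) ^ 2 - (y - a) ^ 2| = |x - y| * (|x - a| + |y - a|) := by
  have hsum : |(x - a) + (y - a)| = |x - a| + |y - a| :=
    (abs_add_eq_add_abs_iff _ _).mpr (by rcases mul_nonneg_iff.mp hside with h | h <;> tauto)
  rw [← hsum, ← abs_mul]
  ring_nf

theorem abs_sub_bounds_of_hasDerivAt_mul_sub {f g : ℝ → ℝ} {a m M x y : ℝ} (hm : 0 ≤ m)
    (hside : 0 ≤ (x - a) * (y - a))
    (hf : ∀ t ∈ Set.uIcc x y, HasDerivAt f (g t * (t - a)) t)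
    (hg : ∀ t ∈ Set.uIcc x y, m ≤ g t ∧ g t ≤ M) :
    m / 2 * |x - y| * max |x - a| |y - a| ≤ |f x - f y| ∧
      |f x - f y| ≤ M * |x - y| * max |x - a| |y - a| := by
  obtain ⟨ξ, hξ, hfξ⟩ := exists_sub_eq_mul_sq_sub_sq_of_hasDerivAt hside hf
  obtain ⟨hmξ, hMξ⟩ := hg ξ hξ
  have hfξ' : |f x - f y| = g ξ * (|x - y| * (|x - a| + |y - a|)) / 2 := by
    rw [hfξ, abs_div, abs_mul, abs_of_nonneg (hm.trans hmξ), abs_sq_sub_sq_eq_of_same_side hside,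
      abs_two]
  have hmax₁ : max |x - a| |y - a| ≤ |x - a| + |y - a| :=
    max_le (le_add_of_nonneg_right (abs_nonneg _)) (le_add_of_nonneg_left (abs_nonneg _))
  have hmax₂ : |x - a| + |y - a| ≤ 2 * max |x - a| |y - a| := by
    linarith [le_max_left |x - a| |y - a|, le_max_right |x - a| |y - a|]
  have hxy := abs_nonneg (x - y)
  rw [hfξ']
  constructor
  · calc m / 2 * |x - y| * max |x - a| |y - a|
        ≤ m * (|x - y| * (|x - a| + |y - a|)) / 2 := by
          nlinarith [mul_le_mul_of_nonneg_left hmax₁ (mul_nonneg hm hxy)]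
      _ ≤ g ξ * (|x - y| * (|x - a| + |y - a|)) / 2 := by gcongr
  · calc g ξ * (|x - y| * (|x - a| + |y - a|)) / 2
        ≤ M * (|x - y| * (|x - a| + |y - a|)) / 2 := by gcongr
      _ ≤ M * |x - y| * max |x - a| |y - a| := by
          nlinarith [mul_le_mul_of_nonneg_left hmax₂ (mul_nonneg (hm.trans (hmξ.trans hMξ)) hxy)]

noncomputable def sqrtProd (x : ℝ) : ℝ := Real.sqrt ((1 + x ^ 2) * (2 + x ^ 2))

noncomputable def lamDeriv (x : ℝ) : ℝ := (x ^ 4 + 2 * x ^ 2 + 2) / ((1 + x ^ 2) * sqrtProd x)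

noncomputable def lamDeriv2Factor (x : ℝ) : ℝ :=
  x * (x + gamma0) * (x ^ 2 + (Real.sqrt 7 - 1)) / ((1 + x ^ 2) ^ 2 * (2 + x ^ 2) * sqrtProd x)

lemma sqrtProd_pos (x : ℝ) : 0 < sqrtProd x := Real.sqrt_pos.mpr (by positivity)

lemma sq_sqrtProd (x : ℝ) : sqrtProd x ^ 2 = (1 + x ^ 2) * (2 + x ^ 2) :=
  Real.sq_sqrt (by positivity)

@[fun_prop]
lemma continuous_sqrtProd : Continuous sqrtProd := by
  unfold sqrtProd; fun_prop

lemma hasDerivAt_sqrtProd (x : ℝ) : HasDerivAt sqrtProd (x * (3 + 2 * x ^ 2) / sqrtProd x) x := by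
  have h : HasDerivAt (fun y : ℝ => (1 + y ^ 2) * (2 + y ^ 2))
      (2 * x ^ 1 * (2 + x ^ 2) + (1 + x ^ 2) * (2 * x ^ 1)) x :=
    ((hasDerivAt_pow 2 x).const_add 1).mul ((hasDerivAt_pow 2 x).const_add 2)
  refine (h.sqrt (by positivity)).congr_deriv ?_
  rw [sqrtProd]
  ring

lemma lam_eq_mul_sqrtProd_div (x : ℝ) : lam x = x * sqrtProd x / (1 + x ^ 2) := by
  have hA : (0:ℝ) < 1 + x ^ 2 := by positivity
  have hsA : Real.sqrt (1 + x ^ 2) ^ 2 = 1 + x ^ 2 := Real.sq_sqrt hA.le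
  rw [lam, sqrtProd, Real.sqrt_div (by positivity), Real.sqrt_mul hA.le, eq_div_iff hA.ne']
  field_simp
  linear_combination (-x) * hsA

lemma hasDerivAt_lam (x : ℝ) : HasDerivAt lam (lamDeriv x) x := by
  rw [show lam = fun y => y * sqrtProd y / (1 + y ^ 2) from funext lam_eq_mul_sqrtProd_div]
  have hS := sqrtProd_pos x
  have h1 : HasDerivAt (fun y : ℝ => y * sqrtProd y)
      (1 * sqrtProd x + x * (x * (3 + 2 * x ^ 2) / sqrtProd x)) x :=
    (hasDerivAt_id x).mul (hasDerivAt_sqrtProd x)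
  have h2 : HasDerivAt (fun y : ℝ => 1 + y ^ 2) (2 * x ^ 1) x := (hasDerivAt_pow 2 x).const_add 1
  have h := h1.div h2 (by positivity)
  refine h.congr_deriv ?_
  rw [lamDeriv]
  field_simp
  linear_combination (1 - x ^ 2) * sq_sqrtProd x

lemma gamma0_pos : 0 < gamma0 := Real.sqrt_pos.mpr (by positivity)

lemma gamma0_sq : gamma0 ^ 2 = 1 + Real.sqrt 7 := Real.sq_sqrt (by positivity)

lemma one_lt_sqrt_seven : 1 < Real.sqrt 7 := by
  rw [Real.lt_sqrt zero_le_one]; norm_num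

lemma lamDeriv2Factor_mul_sub_gamma0 (x : ℝ) : lamDeriv2Factor x * (x - gamma0) =
    x * (x ^ 4 - 2 * x ^ 2 - 6) / ((1 + x ^ 2) ^ 2 * (2 + x ^ 2) * sqrtProd x) := by
  have h7 : Real.sqrt 7 ^ 2 = 7 := Real.sq_sqrt (by norm_num)
  rw [lamDeriv2Factor, div_mul_eq_mul_div]
  congr 1
  linear_combination (-(x * (x ^ 2 + Real.sqrt 7 - 1))) * gamma0_sq + (-x) * h7

lemma hasDerivAt_lamDeriv (x : ℝ) :
    HasDerivAt lamDeriv (lamDeriv2Factor x * (x - gamma0)) x := by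
  have hS := sqrtProd_pos x
  have h1 : HasDerivAt (fun y : ℝ => y ^ 4 + 2 * y ^ 2 + 2) (4 * x ^ 3 + 2 * (2 * x ^ 1)) x :=
    ((hasDerivAt_pow 4 x).add ((hasDerivAt_pow 2 x).const_mul 2)).add_const 2
  have h2 : HasDerivAt (fun y : ℝ => (1 + y ^ 2) * sqrtProd y)
      (2 * x ^ 1 * sqrtProd x + (1 + x ^ 2) * (x * (3 + 2 * x ^ 2) / sqrtProd x)) x :=
    ((hasDerivAt_pow 2 x).const_add 1).mul (hasDerivAt_sqrtProd x)
  refine (h1.div h2 (by positivity)).congr_deriv ?_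
  rw [lamDeriv2Factor_mul_sub_gamma0]
  field_simp
  linear_combination (x * (2 * x ^ 2 * (x ^ 2 + 2) ^ 2 - x ^ 4 + 2 * x ^ 2 + 6)) * sq_sqrtProd x

lemma continuous_lamDeriv2Factor : Continuous lamDeriv2Factor := by
  unfold lamDeriv2Factor
  exact Continuous.div (by fun_prop) (by fun_prop)
    fun x => (by have := sqrtProd_pos x; positivity)

lemma lamDeriv2Factor_gamma0_pos : 0 < lamDeriv2Factor gamma0 := by
  have hγ := gamma0_pos
  have hS := sqrtProd_pos gamma0
  have h7 : 0 < Real.sqrt 7 - 1 := by linarith [one_lt_sqrt_seven]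
  unfold lamDeriv2Factor
  positivity

theorem stmt_9 : ∃ δ₀ c C : ℝ, 0 < δ₀ ∧ 0 < c ∧ c ≤ C ∧
    ∀ x y : ℝ,
      ((gamma0 - δ₀ < x ∧ x ≤ gamma0 ∧ gamma0 - δ₀ < y ∧ y ≤ gamma0) ∨
       (gamma0 ≤ x ∧ x < gamma0 + δ₀ ∧ gamma0 ≤ y ∧ y < gamma0 + δ₀)) →
      c * |x - y| * max |x - gamma0| |y - gamma0| ≤ |deriv lam x - deriv lam y| ∧
      |deriv lam x - deriv lam y| ≤ C * |x - y| * max |x - gamma0| |y - gamma0| := by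
  set k := lamDeriv2Factor gamma0
  have hk : 0 < k := lamDeriv2Factor_gamma0_pos
  obtain ⟨δ, hδ, hbounds⟩ := Metric.eventually_nhds_iff.mp
    (continuous_lamDeriv2Factor.continuousAt.eventually
      (Icc_mem_nhds (by linarith : k / 2 < k) (by linarith : k < 2 * k)))
  refine ⟨δ, k / 2 / 2, 2 * k, hδ, by positivity, by linarith, fun x y hxy => ?_⟩
  have hside : 0 ≤ (x - gamma0) * (y - gamma0) := by
    rcases hxy with h | h <;> nlinarith
  have hball : Set.uIcc x y ⊆ Metric.ball gamma0 δ := by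
    rw [Real.ball_eq_Ioo]
    refine Set.ordConnected_Ioo.uIcc_subset ?_ ?_ <;>
      rcases hxy with h | h <;> constructor <;> linarith
  rw [(hasDerivAt_lam x).deriv, (hasDerivAt_lam y).deriv]
  exact abs_sub_bounds_of_hasDerivAt_mul_sub (by positivity) hside
    (fun t _ => hasDerivAt_lamDeriv t) (fun t ht => hbounds (hball ht))
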